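/- Let G be a simple connected graph and let v_i, v_j be adjacent vertices with degrees d_i, d_j. Then 𝓛E_G(v_i) · 𝓛E_G(v_j) ≥ 1/(d_i d_j) and 𝓛E_G(v_i) + 𝓛E_G(v_j) ≥ 2/√(d_i d_j). -/

import Mathlib

open Matrix BigOperators Finset

/-- The square root of a positive semidefinite matrix (as in the older Mathlib). -/
noncomputable def Matrix.PosSemidef.sqrt {n 𝕜 : Type*} [Fintype n] [DecidableEq n] [RCLike 𝕜]
    [PartialOrder 𝕜] [StarOrderedRing 𝕜]
    {A : Matrix n n 𝕜} (hA : A.PosSemidef) : Matrix n n 𝕜 :=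
  hA.1.eigenvectorUnitary.1 * diagonal ((↑) ∘ (√·) ∘ hA.1.eigenvalues) *
    (star hA.1.eigenvectorUnitary : Matrix n n 𝕜)

/-- The absolute value of a real matrix `B`, defined as `(B * Bᵀ)^(1/2)`. -/
noncomputable def matAbs {n : ℕ} (B : Matrix (Fin n) (Fin n) ℝ) : Matrix (Fin n) (Fin n) ℝ :=
  (Matrix.conjTranspose_eq_transpose_of_trivial B ▸
    Matrix.posSemidef_self_mul_conjTranspose B : (B * Bᵀ).PosSemidef).sqrt

/-- The (adjacency) energy of the vertex `i` of the graph `G`: `|A|_{ii}`. -/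
noncomputable def vertexEnergy {n : ℕ} (G : SimpleGraph (Fin n)) [DecidableRel G.Adj]
    (i : Fin n) : ℝ :=
  matAbs (G.adjMatrix ℝ) i i

/-- The Laplacian energy of the vertex `i` of the graph `G`: `(|L - (2m/n) I|)_{ii}`. -/
noncomputable def vertexLapEnergy {n : ℕ} (G : SimpleGraph (Fin n)) [DecidableRel G.Adj]
    (i : Fin n) : ℝ :=
  matAbs (G.lapMatrix ℝ - ((2 * (G.edgeFinset.card : ℝ)) / n) • 1) i i

/-- The normalized Laplacian `𝓛 = I - D^{-1/2} A D^{-1/2}` of the graph `G`. -/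
noncomputable def normLap {n : ℕ} (G : SimpleGraph (Fin n)) [DecidableRel G.Adj] :
    Matrix (Fin n) (Fin n) ℝ :=
  1 - Matrix.diagonal (fun i => (Real.sqrt (G.degree i))⁻¹) * G.adjMatrix ℝ *
      Matrix.diagonal (fun i => (Real.sqrt (G.degree i))⁻¹)

/-- The normalized Laplacian energy of the vertex `i` of the graph `G`: `(|𝓛 - I|)_{ii}`. -/
noncomputable def vertexNormLapEnergy {n : ℕ} (G : SimpleGraph (Fin n)) [DecidableRel G.Adj]
    (i : Fin n) : ℝ :=
  matAbs (normLap G - 1) i i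

/-!
With `M = 𝓛 - I = -D^{-1/2} A D^{-1/2}`, which is symmetric with zero diagonal and entry
`-1/√(dᵢ dⱼ)` at an edge `ij`, the matrices `|M| - M = 2 M⁻` and `|M| + M = 2 M⁺` are positive
semidefinite. Their `2 × 2` principal minors on `{i, j}` give `(|M|ᵢⱼ ∓ Mᵢⱼ)² ≤ |M|ᵢᵢ |M|ⱼⱼ`;
adding the two cancels the cross term, so `|M|ᵢᵢ |M|ⱼⱼ ≥ Mᵢⱼ² = 1/(dᵢ dⱼ)`. The bound on the
sum follows by AM-GM.
-/

open scoped MatrixOrder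

lemma matAbs_eq_cfcAbs_transpose {n : ℕ} (M : Matrix (Fin n) (Fin n) ℝ) :
    matAbs M = CFC.abs Mᵀ := by
  have hP : (M * Mᵀ).PosSemidef := by
    simpa using Matrix.posSemidef_self_mul_conjTranspose M
  show hP.sqrt = _
  rw [CFC.abs, star_eq_conjTranspose, conjTranspose_eq_transpose_of_trivial, transpose_transpose,
    CFC.sqrt_eq_cfc, cfc_nnreal_eq_real _ (M * Mᵀ), hP.1.cfc_eq]
  simp only [Matrix.PosSemidef.sqrt, IsHermitian.cfc, Unitary.conjStarAlgAut_apply]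
  congr 3
  funext k
  simp [hP.eigenvalues_nonneg k]

lemma Matrix.PosSemidef.apply_sq_le_mul {ι : Type*} [Fintype ι] [DecidableEq ι]
    {P : Matrix ι ι ℝ} (hP : P.PosSemidef) (i j : ι) : P i j ^ 2 ≤ P i i * P j j := by
  have hdet := (hP.submatrix ![i, j]).det_nonneg
  have hsymm : P j i = P i j := by simpa using hP.isHermitian.apply i j
  simp only [det_fin_two, submatrix_apply, Matrix.cons_val_zero, Matrix.cons_val_one, hsymm] at hdet
  nlinarith

lemma Matrix.IsHermitian.sq_sub_mul_le_cfcAbs {ι : Type*} [Fintype ι] [DecidableEq ι]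
    {M : Matrix ι ι ℝ} (hM : M.IsHermitian) (i j : ι) :
    M i j ^ 2 - M i i * M j j ≤ CFC.abs M i i * CFC.abs M j j := by
  have hsub : (CFC.abs M - M).PosSemidef := by
    rw [CFC.abs_sub_self M hM.isSelfAdjoint]
    exact (smul_nonneg zero_le_two (CFC.negPart_nonneg M)).posSemidef
  have hadd : (CFC.abs M + M).PosSemidef := by
    rw [CFC.abs_add_self M hM.isSelfAdjoint]
    exact (smul_nonneg zero_le_two (CFC.posPart_nonneg M)).posSemidef
  have h₁ := hsub.apply_sq_le_mul i j
  have h₂ := hadd.apply_sq_le_mul i j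
  simp only [Matrix.sub_apply, Matrix.add_apply] at h₁ h₂
  nlinarith [sq_nonneg (CFC.abs M i j)]

lemma two_mul_sqrt_le_add_of_le_mul {p x y : ℝ} (hx : 0 ≤ x) (hy : 0 ≤ y) (h : p ≤ x * y) :
    2 * √p ≤ x + y := by
  have hxy : 2 * (√x * √y) ≤ √x ^ 2 + √y ^ 2 := by
    simpa [mul_assoc] using two_mul_le_add_sq (√x) (√y)
  calc 2 * √p ≤ 2 * (√x * √y) := by gcongr; rw [← Real.sqrt_mul hx]; exact Real.sqrt_le_sqrt h
    _ ≤ x + y := by rwa [Real.sq_sqrt hx, Real.sq_sqrt hy] at hxy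

namespace SimpleGraph

variable {n : ℕ} (G : SimpleGraph (Fin n)) [DecidableRel G.Adj]

lemma normLap_sub_one_apply (a b : Fin n) :
    (normLap G - 1) a b = if G.Adj a b then -((√(G.degree a))⁻¹ * (√(G.degree b))⁻¹) else 0 := by
  rw [normLap, sub_sub_cancel_left, neg_apply, mul_diagonal, diagonal_mul, adjMatrix_apply]
  split_ifs <;> simp

lemma transpose_normLap_sub_one : (normLap G - 1)ᵀ = normLap G - 1 := by
  ext a b
  simp only [transpose_apply, normLap_sub_one_apply, G.adj_comm, mul_comm]

lemma normLap_sub_one_apply_self (a : Fin n) : (normLap G - 1) a a = 0 := by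
  rw [normLap_sub_one_apply, if_neg (G.irrefl (v := a))]

lemma normLap_sub_one_apply_sq_of_adj {a b : Fin n} (hab : G.Adj a b) :
    (normLap G - 1) a b ^ 2 = 1 / ((G.degree a : ℝ) * G.degree b) := by
  rw [normLap_sub_one_apply, if_pos hab, neg_sq, mul_pow, inv_pow, inv_pow,
    Real.sq_sqrt (Nat.cast_nonneg _), Real.sq_sqrt (Nat.cast_nonneg _), one_div, mul_inv]

lemma vertexNormLapEnergy_eq (a : Fin n) :
    vertexNormLapEnergy G a = CFC.abs (normLap G - 1) a a := by
  rw [vertexNormLapEnergy, matAbs_eq_cfcAbs_transpose, transpose_normLap_sub_one]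

lemma vertexNormLapEnergy_nonneg (a : Fin n) : 0 ≤ vertexNormLapEnergy G a := by
  rw [vertexNormLapEnergy_eq]
  exact (CFC.abs_nonneg _).posSemidef.diag_nonneg

lemma inv_degree_mul_le_vertexNormLapEnergy_mul {a b : Fin n} (hab : G.Adj a b) :
    1 / ((G.degree a : ℝ) * G.degree b) ≤ vertexNormLapEnergy G a * vertexNormLapEnergy G b := by
  have hM : (normLap G - 1).IsHermitian := by
    rw [IsHermitian, conjTranspose_eq_transpose_of_trivial, transpose_normLap_sub_one]
  have := hM.sq_sub_mul_le_cfcAbs a b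
  rwa [normLap_sub_one_apply_sq_of_adj G hab, normLap_sub_one_apply_self,
    normLap_sub_one_apply_self, mul_zero, sub_zero, ← vertexNormLapEnergy_eq,
    ← vertexNormLapEnergy_eq] at this

end SimpleGraph

theorem stmt15_general {n : ℕ} (G : SimpleGraph (Fin n)) [DecidableRel G.Adj]
    (i j : Fin n) (hadj : G.Adj i j) :
    vertexNormLapEnergy G i * vertexNormLapEnergy G j ≥
        1 / ((G.degree i : ℝ) * (G.degree j : ℝ)) ∧
      vertexNormLapEnergy G i + vertexNormLapEnergy G j ≥
        2 / Real.sqrt ((G.degree i : ℝ) * (G.degree j : ℝ)) := by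
  have hprod := G.inv_degree_mul_le_vertexNormLapEnergy_mul hadj
  refine ⟨hprod, ?_⟩
  have hsum := two_mul_sqrt_le_add_of_le_mul (G.vertexNormLapEnergy_nonneg i)
    (G.vertexNormLapEnergy_nonneg j) hprod
  rwa [Real.sqrt_div' _ (by positivity), Real.sqrt_one, mul_one_div] at hsum

theorem stmt15 {n : ℕ} (G : SimpleGraph (Fin n)) [DecidableRel G.Adj]
    (hconn : G.Connected) (i j : Fin n) (hadj : G.Adj i j) :
    vertexNormLapEnergy G i * vertexNormLapEnergy G j ≥
        1 / ((G.degree i : ℝ) * (G.degree j : ℝ)) ∧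
      vertexNormLapEnergy G i + vertexNormLapEnergy G j ≥
        2 / Real.sqrt ((G.degree i : ℝ) * (G.degree j : ℝ)) :=
  stmt15_general G i j hadj
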